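/- Fix h > 0. Then lim_{α→2⁻} c_{2,α} ∫₀^h ∫₀^h (ξ²+η²)^{−α/2} dξ dη = 1, where c_{2,α} = 2^{α−1} α Γ((2+α)/2)/(π Γ(1−α/2)). -/

import Mathlib

/-! The integrand is symmetric in `ξ ↔ η`, so the square is twice the triangle `0 < y < x ≤ h`,
and the substitution `y = x t` gives `∫₀^x (x² + y²)^(-α/2) dy = x^(1-α) G(α)` with
`G(α) = ∫₀¹ (1 + t²)^(-α/2) dt` (`integralOneAddSqRpow`). Hence the corner integral equals
`2 G(α) h^(2-α) / (2 - α)` exactly. As `α → 2⁻`, `G(α) → G(2) = arctan 1 = π/4` and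
`h^(2-α) → 1`, while `Γ(2 - α/2) = (1 - α/2) Γ(1 - α/2)` shows `c_{2,α} / (2 - α) → 2/π`;
the product tends to `2 · π/4 · 2/π = 1`. -/

open Filter MeasureTheory intervalIntegral

/-- Normalization constant of the 2D fractional Laplacian. -/
noncomputable def c2 (α : ℝ) : ℝ :=
  2 ^ (α - 1) * α * Real.Gamma ((2 + α) / 2) / (Real.pi * Real.Gamma (1 - α / 2))

open Set Real Topology

section SymmetricSquare

variable {μ : Measure ℝ} [SFinite μ] {f : ℝ × ℝ → ℝ} {s : Set ℝ}

lemma prod_self_diagonal_eq_zero [NullSingletonClass μ] : μ.prod μ (diagonal ℝ) = 0 := by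
  rw [Measure.prod_apply (s := diagonal ℝ)
    (measurableSet_eq_fun measurable_fst measurable_snd)]
  have hslice (x : ℝ) : Prod.mk x ⁻¹' diagonal ℝ = {x} := by
    ext y; simp [eq_comm]
  simp [hslice]

lemma setIntegral_prod_self_eq_two_mul_of_symm [NullSingletonClass μ] (hs : MeasurableSet s)
    (hf : IntegrableOn f (s ×ˢ s) (μ.prod μ)) (hsymm : ∀ x y, f (y, x) = f (x, y)) :
    ∫ p in s ×ˢ s, f p ∂μ.prod μ =
      2 * ∫ p in s ×ˢ s ∩ {p | p.2 < p.1}, f p ∂μ.prod μ := by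
  set below := s ×ˢ s ∩ {p : ℝ × ℝ | p.2 < p.1}
  set above := s ×ˢ s ∩ {p : ℝ × ℝ | p.1 < p.2}
  have hbelow : MeasurableSet below :=
    (hs.prod hs).inter (measurableSet_lt measurable_snd measurable_fst)
  have habove : above = Prod.swap ⁻¹' below := by
    ext p; simp only [above, below, mem_inter_iff, mem_preimage, mem_prod, mem_ofPred_eq,
      Prod.fst_swap, Prod.snd_swap]; tauto
  have hsplit : s ×ˢ s =ᵐ[μ.prod μ] (below ∪ above : Set (ℝ × ℝ)) := by
    rw [ae_eq_set, sdiff_eq_empty.2 (union_subset inter_subset_left inter_subset_left),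
      measure_empty]
    refine ⟨measure_mono_null (fun p ⟨hp, hnot⟩ => ?_) prod_self_diagonal_eq_zero, rfl⟩
    simp only [below, above, mem_union, mem_inter_iff, hp, true_and, not_or, mem_ofPred_eq,
      not_lt] at hnot
    exact mem_diagonal_iff.2 (le_antisymm hnot.1 hnot.2)
  have hswap : ∫ p in above, f p ∂μ.prod μ = ∫ p in below, f p ∂μ.prod μ := by
    rw [habove, ← (Measure.measurePreserving_swap (μ := μ) (ν := μ)).setIntegral_preimage_emb
      MeasurableEquiv.prodComm.measurableEmbedding f below]
    exact setIntegral_congr_fun (hbelow.preimage measurable_swap) fun p _ => hsymm p.2 p.1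
  have hdisj : Disjoint below above :=
    disjoint_left.2 fun p hb ha => lt_asymm hb.2 (show p.1 < p.2 from ha.2)
  rw [setIntegral_congr_set hsplit,
    setIntegral_union hdisj (habove ▸ hbelow.preimage measurable_swap)
      (hf.mono_set inter_subset_left) (hf.mono_set inter_subset_left), hswap, two_mul]

lemma setIntegral_prod_lt_eq_integral_Iio (hf : IntegrableOn f (s ×ˢ s) (μ.prod μ)) :
    ∫ p in s ×ˢ s ∩ {p | p.2 < p.1}, f p ∂μ.prod μ =
      ∫ x in s, ∫ y in s ∩ Iio x, f (x, y) ∂μ ∂μ := by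
  rw [← setIntegral_indicator (measurableSet_lt measurable_snd measurable_fst),
    setIntegral_prod _ (hf.indicator (measurableSet_lt measurable_snd measurable_fst))]
  congr 1 with x
  rw [← setIntegral_indicator measurableSet_Iio]
  rfl

end SymmetricSquare

noncomputable def integralOneAddSqRpow (α : ℝ) : ℝ :=
  ∫ t in (0 : ℝ)..1, (1 + t ^ 2) ^ (-α / 2)

lemma integral_sq_add_sq_rpow {c : ℝ} (α : ℝ) (hc : 0 < c) :
    ∫ y in (0 : ℝ)..c, (c ^ 2 + y ^ 2) ^ (-α / 2) = c ^ (1 - α) * integralOneAddSqRpow α := by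
  have hscale (t : ℝ) :
      (c ^ 2 + (c * t) ^ 2) ^ (-α / 2) = c ^ (-α) * (1 + t ^ 2) ^ (-α / 2) := by
    rw [show c ^ 2 + (c * t) ^ 2 = c ^ (2 : ℝ) * (1 + t ^ 2) by norm_cast; ring,
      mul_rpow (by positivity) (by positivity), ← rpow_mul hc.le]
    ring_nf
  calc ∫ y in (0 : ℝ)..c, (c ^ 2 + y ^ 2) ^ (-α / 2)
      = c * ∫ t in (0 : ℝ)..1, (c ^ 2 + (c * t) ^ 2) ^ (-α / 2) := by
        rw [mul_integral_comp_mul_left (f := fun y => (c ^ 2 + y ^ 2) ^ (-α / 2)), mul_zero,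
          mul_one]
    _ = c ^ (1 - α) * integralOneAddSqRpow α := by
        rw [funext hscale, intervalIntegral.integral_const_mul, ← mul_assoc, integralOneAddSqRpow,
          sub_eq_add_neg, rpow_add hc, rpow_one]

lemma integrableOn_sq_add_sq_rpow {α : ℝ} (hα₀ : 0 ≤ α) (hα₂ : α < 2) (h : ℝ) :
    IntegrableOn (fun p : ℝ × ℝ => (p.1 ^ 2 + p.2 ^ 2) ^ (-α / 2)) (Ioc 0 h ×ˢ Ioc 0 h) := by
  -- `x² + y² ≥ 2xy ≥ xy` on the square, and `x^(-α/2)` is integrable near `0` because `α < 2`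
  have hpow : IntegrableOn (fun x : ℝ => x ^ (-α / 2)) (Ioc 0 h) :=
    (intervalIntegrable_rpow' (by linarith)).1
  have hdom := hpow.mul_prod hpow
  rw [Measure.prod_restrict, ← Measure.volume_eq_prod] at hdom
  refine hdom.mono' (Measurable.aestronglyMeasurable (by fun_prop)) ?_
  filter_upwards [ae_restrict_mem (measurableSet_Ioc.prod measurableSet_Ioc)]
    with ⟨x, y⟩ ⟨⟨hx, _⟩, ⟨hy, _⟩⟩
  rw [norm_of_nonneg (by positivity), ← mul_rpow hx.le hy.le]
  exact rpow_le_rpow_of_nonpos (by positivity) (by nlinarith [sq_nonneg (x - y)]) (by linarith)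

lemma integral_corner_eq {α h : ℝ} (hα₀ : 0 ≤ α) (hα₂ : α < 2) (hh : 0 < h) :
    ∫ η in (0 : ℝ)..h, ∫ ξ in (0 : ℝ)..h, (ξ ^ 2 + η ^ 2) ^ (-α / 2)
      = 2 * integralOneAddSqRpow α * h ^ (2 - α) / (2 - α) := by
  set F : ℝ × ℝ → ℝ := fun p => (p.1 ^ 2 + p.2 ^ 2) ^ (-α / 2)
  have hF := integrableOn_sq_add_sq_rpow hα₀ hα₂ h
  rw [Measure.volume_eq_prod] at hF
  have hinner : ∀ x ∈ Ioc 0 h,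
      ∫ y in Ioc 0 h ∩ Iio x, F (x, y) = x ^ (1 - α) * integralOneAddSqRpow α := by
    intro x hx
    rw [show Ioc 0 h ∩ Iio x = Ioo 0 x by grind, ← integral_Ioc_eq_integral_Ioo,
      ← integral_of_le hx.1.le]
    exact integral_sq_add_sq_rpow α hx.1
  calc _ = ∫ p in Ioc 0 h ×ˢ Ioc 0 h, F p ∂volume.prod volume := by
        rw [setIntegral_prod _ hF, integral_of_le hh.le]
        refine setIntegral_congr_fun measurableSet_Ioc fun η _ => ?_
        simp only [integral_of_le hh.le, add_comm]
    _ = 2 * ∫ x in Ioc 0 h, x ^ (1 - α) * integralOneAddSqRpow α := by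
        rw [setIntegral_prod_self_eq_two_mul_of_symm measurableSet_Ioc hF
          (fun x y => by simp only [add_comm]), setIntegral_prod_lt_eq_integral_Iio hF,
          setIntegral_congr_fun measurableSet_Ioc hinner]
    _ = _ := by
        rw [← integral_of_le hh.le, intervalIntegral.integral_mul_const,
          integral_rpow (Or.inl (by linarith)), zero_rpow (by linarith),
          show 1 - α + 1 = 2 - α by ring]
        ring

lemma continuous_integralOneAddSqRpow : Continuous integralOneAddSqRpow :=
  continuous_parametric_intervalIntegral_of_continuous'
    (f := fun α t : ℝ => (1 + t ^ 2) ^ (-α / 2))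
    ((by fun_prop : Continuous fun p : ℝ × ℝ => 1 + p.2 ^ 2).rpow (by fun_prop)
      fun _ => Or.inl (by positivity)) 0 1

lemma integralOneAddSqRpow_two : integralOneAddSqRpow 2 = π / 4 := by
  simp only [integralOneAddSqRpow, show -(2 : ℝ) / 2 = -1 by norm_num, rpow_neg_one,
    integral_inv_one_add_sq, arctan_one, arctan_zero, sub_zero]

lemma continuousAt_Gamma_of_pos {s : ℝ} (hs : 0 < s) : ContinuousAt Gamma s :=
  (differentiableAt_Gamma fun m hm => by linarith [m.cast_nonneg (α := ℝ)]).continuousAt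

lemma tendsto_c2_div_two_sub_nhdsLT :
    Tendsto (fun α => c2 α / (2 - α)) (𝓝[<] 2) (𝓝 (2 / π)) := by
  set ψ : ℝ → ℝ := fun α =>
    2 ^ (α - 1) * α * Gamma ((2 + α) / 2) / (2 * π * Gamma (2 - α / 2))
  have hψ : ∀ α < 2, c2 α / (2 - α) = ψ α := by
    intro α hα
    have hΓ : Gamma (2 - α / 2) = (1 - α / 2) * Gamma (1 - α / 2) := by
      rw [show 2 - α / 2 = (1 - α / 2) + 1 by ring, Gamma_add_one (by linarith)]
    simp only [c2, ψ, hΓ]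
    field_simp
  have hψ_cont : ContinuousAt ψ 2 := by
    have hpow : Continuous fun α : ℝ => (2 : ℝ) ^ (α - 1) :=
      continuous_const.rpow (by fun_prop) fun _ => Or.inl two_ne_zero
    have hΓ₁ : ContinuousAt (fun α : ℝ => Gamma ((2 + α) / 2)) 2 :=
      ContinuousAt.comp (g := Gamma) (continuousAt_Gamma_of_pos (by norm_num)) (by fun_prop)
    have hΓ₂ : ContinuousAt (fun α : ℝ => Gamma (2 - α / 2)) 2 :=
      ContinuousAt.comp (g := Gamma) (continuousAt_Gamma_of_pos (by norm_num)) (by fun_prop)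
    exact ((hpow.continuousAt.mul continuousAt_id).mul hΓ₁).div (continuousAt_const.mul hΓ₂)
      (by norm_num [Gamma_one, pi_ne_zero])
  have hψ_two : ψ 2 = 2 / π := by
    norm_num [ψ, Gamma_two, Gamma_one]
    ring
  rw [← hψ_two]
  exact (hψ_cont.tendsto.mono_left nhdsWithin_le_nhds).congr'
    (eventually_nhdsWithin_of_forall fun α hα => (hψ α hα).symm)

/-- For fixed `h > 0`, `c_{2,α} ∫₀^h ∫₀^h (ξ²+η²)^{-α/2} dξ dη → 1` as `α → 2⁻`. -/
theorem c2_times_corner_integral_tendsto_one (h : ℝ) (hh : 0 < h) :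
    Tendsto (fun α : ℝ =>
        c2 α * ∫ η in (0 : ℝ)..h, ∫ ξ in (0 : ℝ)..h, (ξ ^ 2 + η ^ 2) ^ (-α / 2))
      (nhdsWithin 2 (Set.Iio 2)) (nhds 1) := by
  have hG : Tendsto integralOneAddSqRpow (𝓝[<] 2) (𝓝 (π / 4)) :=
    integralOneAddSqRpow_two ▸ continuous_integralOneAddSqRpow.continuousWithinAt.tendsto
  have hpow : Tendsto (fun α : ℝ => h ^ (2 - α)) (𝓝[<] 2) (𝓝 1) := by
    have hcont : Continuous fun α : ℝ => h ^ (2 - α) :=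
      continuous_const.rpow (by fun_prop) fun _ => Or.inl hh.ne'
    simpa using (hcont.continuousWithinAt (s := Iio 2) (x := 2)).tendsto
  have hlim := tendsto_c2_div_two_sub_nhdsLT.mul ((hG.const_mul 2).mul hpow)
  rw [show 2 / π * (2 * (π / 4) * 1) = 1 by field_simp; ring] at hlim
  refine hlim.congr' ?_
  filter_upwards [Ioo_mem_nhdsLT (show (0 : ℝ) < 2 by norm_num)] with α hα
  rw [integral_corner_eq hα.1.le hα.2 hh]
  ring
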